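/- arXiv:2302.00746 — 4 statements merged into one kernel-verified Lean document; each statement's English description precedes it below -/
import Mathlib

section
/- For any natural numbers $a, q$ with $\gcd(a,q)=1$ and any nonzero integer $x$, the quadratic Gauss-type sum $S = \sum_{b=0}^{q-1} e^{2\pi i a x b^2 / q}$ satisfies $|S| \le q^{1/2} \gcd(q, |x|)^{1/2} \cdot C$ for an absolute constant $C$ (in fact one may take $|S| \le 2 q^{1/2}\gcd(q,|x|)^{1/2}$). -/
/-!
Write `S = ∑_b ψ(m b²)` with `m = a x` and `ψ` the standard additive character of `ZMod q`.
Substituting `b = c + h` in `|S|² = ∑_{b,c} ψ(m b² - m c²)` leaves the inner sum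
`∑_c ψ(c · 2 m h)`, which is `q` or `0` according as `2 m h = 0`, so `|S|² ≤ q · #{h | 2 m h = 0}`.
Since `a` is a unit mod `q`, every such `h` is killed by `2 gcd(q, x)`, and in the cyclic group
`ZMod q` at most `2 gcd(q, x)` elements are.
-/

open Complex

open Finset ComplexConjugate

namespace AddChar

variable {R : Type*} [CommRing R] [Fintype R] [DecidableEq R] {ψ : AddChar R ℂ}

theorem sum_quadratic_mul_conj (hψ : ψ.IsPrimitive) (m : R) :
    (∑ b, ψ (m * b ^ 2)) * conj (∑ b, ψ (m * b ^ 2)) =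
      Fintype.card R * ∑ h with 2 * m * h = 0, ψ (m * h ^ 2) := by
  calc (∑ b, ψ (m * b ^ 2)) * conj (∑ b, ψ (m * b ^ 2))
      = ∑ c, ∑ b, ψ (m * b ^ 2 - m * c ^ 2) := by
        simp only [map_sum, sum_mul_sum, sub_eq_add_neg, map_add_eq_mul, map_neg_eq_conj]
        exact sum_comm
    _ = ∑ c, ∑ h, ψ (m * h ^ 2) * ψ (c * (2 * m * h)) := by
        refine sum_congr rfl fun c _ => ?_
        rw [← Equiv.sum_comp (Equiv.addLeft c)]
        refine sum_congr rfl fun h _ => ?_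
        rw [← map_add_eq_mul, Equiv.coe_addLeft]
        ring_nf
    _ = ∑ h, ψ (m * h ^ 2) * if 2 * m * h = 0 then (Fintype.card R : ℂ) else 0 := by
        rw [sum_comm]
        simp only [← mul_sum, sum_mulShift _ hψ, Nat.cast_ite, Nat.cast_zero]
    _ = Fintype.card R * ∑ h with 2 * m * h = 0, ψ (m * h ^ 2) := by
        rw [mul_sum, sum_filter]
        exact sum_congr rfl fun h _ => by split_ifs <;> ring

theorem sq_norm_sum_quadratic_le (hψ : ψ.IsPrimitive) (m : R) :
    ‖∑ b, ψ (m * b ^ 2)‖ ^ 2 ≤ Fintype.card R * #{h | 2 * m * h = 0} := by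
  rw [sq]
  nth_rw 2 [← Complex.norm_conj]
  rw [← norm_mul, sum_quadratic_mul_conj hψ, norm_mul, Complex.norm_natCast]
  gcongr
  refine (norm_sum_le _ _).trans_eq ?_
  simp [norm_apply]

end AddChar

namespace ZMod

theorem sum_range_natCast {M : Type*} [AddCommMonoid M] (q : ℕ) [NeZero q] (f : ZMod q → M) :
    ∑ b ∈ range q, f b = ∑ b, f b :=
  sum_nbij' (↑) val (by simp) (fun z _ => by simpa using z.val_lt)
    (fun _ hb => val_cast_of_lt (mem_range.1 hb)) (fun z _ => natCast_zmod_val z) (fun _ _ => rfl)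

theorem card_filter_natCast_mul_eq_zero_le {q n : ℕ} [NeZero q] (hn : 0 < n) :
    #{h : ZMod q | (n : ZMod q) * h = 0} ≤ n := by
  convert IsAddCyclic.card_nsmul_eq_zero_le (α := ZMod q) hn using 3
  simp [nsmul_eq_mul]

theorem intCast_gcd_mul_eq_zero {q : ℕ} {c : ℤ} {h : ZMod q} (hc : (c : ZMod q) * h = 0) :
    (Int.gcd q c : ZMod q) * h = 0 := by
  have : ((Int.gcd q c : ℤ) : ZMod q) = Int.gcdB q c * c := by
    simp [Int.gcd_eq_gcd_ab, mul_comm]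
  rw [← Int.cast_natCast, this, mul_assoc, hc, mul_zero]

theorem card_filter_two_mul_eq_zero_le {a q : ℕ} [NeZero q] (ha : a.Coprime q) (x : ℤ) :
    #{h : ZMod q | 2 * ((a : ZMod q) * x) * h = 0} ≤ 2 * Int.gcd q x := by
  refine le_trans (card_le_card fun h hh => ?_)
    (card_filter_natCast_mul_eq_zero_le (Nat.mul_pos two_pos
      (Int.gcd_pos_of_ne_zero_left _ (Nat.cast_ne_zero.2 (NeZero.ne q)))))
  simp only [mem_filter, mem_univ, true_and] at hh ⊢
  have hx : (x : ZMod q) * (2 * h) = 0 := by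
    rw [← ((isUnit_iff_coprime a q).2 ha).mul_right_eq_zero]
    linear_combination hh
  push_cast
  linear_combination intCast_gcd_mul_eq_zero hx

end ZMod

theorem sum_range_exp_eq_sum_stdAddChar (q : ℕ) [NeZero q] (c : ℤ) :
    ∑ b ∈ range q, exp (2 * Real.pi * I * (c * (b : ℂ) ^ 2) / q) =
      ∑ b : ZMod q, ZMod.stdAddChar ((c : ZMod q) * b ^ 2) := by
  rw [← ZMod.sum_range_natCast]
  refine sum_congr rfl fun b _ => ?_
  rw [show (c : ZMod q) * (b : ZMod q) ^ 2 = ((c * b ^ 2 : ℤ) : ZMod q) by push_cast; ring,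
    ZMod.stdAddChar_coe]
  push_cast; ring_nf

theorem gauss_sum_bound_general (a q : ℕ) (x : ℤ) (ha : Nat.Coprime a q) :
    ‖∑ b ∈ Finset.range q,
        Complex.exp (2 * Real.pi * Complex.I * ((a : ℂ) * (x : ℂ) * (b : ℂ) ^ 2) / q)‖ ≤
      2 * Real.sqrt q * Real.sqrt (Int.gcd q x) := by
  rcases q.eq_zero_or_pos with rfl | hq
  · simp
  have : NeZero q := ⟨hq.ne'⟩
  have hsum := sum_range_exp_eq_sum_stdAddChar q (a * x)
  push_cast at hsum
  have hsq := AddChar.sq_norm_sum_quadratic_le (ZMod.isPrimitive_stdAddChar q) ((a : ZMod q) * x)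
  rw [ZMod.card] at hsq
  rw [hsum, ← pow_le_pow_iff_left₀ (norm_nonneg _) (by positivity) two_ne_zero]
  calc _ ≤ _ := hsq
    _ ≤ q * (2 * Int.gcd q x) := by gcongr; exact_mod_cast ZMod.card_filter_two_mul_eq_zero_le ha x
    _ ≤ (2 * √q * √(Int.gcd q x)) ^ 2 := by
        rw [mul_pow, mul_pow, Real.sq_sqrt (by positivity), Real.sq_sqrt (by positivity)]
        nlinarith [Nat.cast_nonneg (α := ℝ) q, Nat.cast_nonneg (α := ℝ) (Int.gcd q x)]

theorem gauss_sum_bound (a q : ℕ) (x : ℤ) (hq : 0 < q) (ha : Nat.Coprime a q)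
    (hx : x ≠ 0) :
    ‖∑ b ∈ Finset.range q,
        Complex.exp (2 * Real.pi * Complex.I * ((a : ℂ) * (x : ℂ) * (b : ℂ) ^ 2) / q)‖ ≤
      2 * Real.sqrt q * Real.sqrt (Int.gcd q x) :=
  gauss_sum_bound_general a q x ha
end

section
/- For a nonzero integer $x$, real $P \ge 1$, and $T_x(\alpha) = \sum_{|y| \le P} e^{2\pi i \alpha x y^2}$, one has $\int_0^1 |T_x(\alpha)|^4\, d\alpha \ll_\varepsilon P^{2+\varepsilon}$ for every $\varepsilon > 0$, with implied constant independent of $x$. -/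
/-!
Orthogonality of `e(kα)` on `[0, 1]` turns the fourth moment into the number of
`(a, b, c, d) ∈ [-N, N]⁴` with `x (a² + c²) = x (b² + d²)`, i.e. `a² + c² = b² + d²` since `x ≠ 0`;
the factorisation `(a - b)(a + b) = (d - c)(d + c)` maps these injectively to solutions of
`uv = st` in `[-2N, 2N]⁴`. Given `(u, v)`, the pair `(s, t)` is determined by a divisor of `uv`
when `uv ≠ 0`, and there are only `O(N)` pairs with `uv = 0`, so the count is
`O(N²) + O(N² · max_{0 < |m| ≤ 4N²} d(m))`, and the divisor bound `d(m) ≪_δ m^δ` finishes.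
-/

open Finset
open scoped Real

lemma add_one_le_mul_rpow_pow {δ x : ℝ} (hδ : 0 < δ) (hx : 2 ≤ x) (e : ℕ) :
    (e + 1 : ℝ) ≤ (1 + (δ * Real.log 2)⁻¹) * (x ^ δ) ^ e := by
  set a := δ * Real.log 2
  have ha : 0 < a := mul_pos hδ (Real.log_pos one_lt_two)
  have hexp : 1 + e * a ≤ (x ^ δ) ^ e :=
    calc 1 + e * a ≤ Real.exp (e * a) := by linarith [Real.add_one_le_exp (e * a)]
      _ = ((2 : ℝ) ^ δ) ^ e := by
        rw [← Real.rpow_natCast, ← Real.rpow_mul zero_le_two, Real.rpow_def_of_pos two_pos]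
        congr 1
        ring
      _ ≤ (x ^ δ) ^ e := by gcongr
  calc (e + 1 : ℝ) ≤ (1 + a⁻¹) * (1 + e * a) := by
        have : (1 + a⁻¹) * (1 + e * a) = e + 1 + (e * a + a⁻¹) := by field_simp; ring
        rw [this]; linarith [show 0 ≤ e * a + a⁻¹ by positivity]
    _ ≤ (1 + a⁻¹) * (x ^ δ) ^ e := by gcongr

lemma add_one_le_rpow_pow {δ x : ℝ} (hx : 2 ≤ x ^ δ) (e : ℕ) : (e + 1 : ℝ) ≤ (x ^ δ) ^ e :=
  calc (e + 1 : ℝ) = 1 + e * 1 := by ring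
    _ ≤ (1 + 1) ^ e := one_add_mul_le_pow (by norm_num) e
    _ ≤ (x ^ δ) ^ e := by gcongr; norm_num [hx]

theorem Nat.exists_card_divisors_le_mul_rpow {δ : ℝ} (hδ : 0 < δ) :
    ∃ C, 0 ≤ C ∧ ∀ n : ℕ, (#n.divisors : ℝ) ≤ C * n ^ δ := by
  set K := 1 + (δ * Real.log 2)⁻¹
  have hK : 1 ≤ K := le_add_of_nonneg_right (by positivity)
  set S := range ⌈(2 : ℝ) ^ δ⁻¹⌉₊
  refine ⟨K ^ #S, by positivity, fun n => ?_⟩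
  rcases eq_or_ne n 0 with rfl | hn
  · simp [Real.zero_rpow hδ.ne']
  -- `p ^ e ∥ n` contributes `(e + 1) / p ^ (e δ)` to `d(n) / n ^ δ`: at most `1` once
  -- `p ^ δ ≥ 2`, which holds for `p ∉ S`, and at most `K` for every prime.
  have hfactor : ∀ p ∈ n.primeFactors, ((n.factorization p + 1 : ℕ) : ℝ) ≤
      (if p ∈ S then K else 1) * ((p : ℝ) ^ δ) ^ n.factorization p := by
    intro p hp
    have hp2 : (2 : ℝ) ≤ p := by exact_mod_cast (Nat.prime_of_mem_primeFactors hp).two_le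
    push_cast
    split_ifs with hpS
    · exact add_one_le_mul_rpow_pow hδ hp2 _
    · rw [one_mul]
      apply add_one_le_rpow_pow
      have : (2 : ℝ) ^ δ⁻¹ ≤ p := Nat.ceil_le.mp (by simpa [S] using hpS)
      calc (2 : ℝ) = ((2 : ℝ) ^ δ⁻¹) ^ δ := (Real.rpow_inv_rpow zero_le_two hδ.ne').symm
        _ ≤ (p : ℝ) ^ δ := by gcongr
  calc (#n.divisors : ℝ) = ∏ p ∈ n.primeFactors, ((n.factorization p + 1 : ℕ) : ℝ) := by
        rw [Nat.card_divisors hn]; push_cast; rfl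
    _ ≤ ∏ p ∈ n.primeFactors, (if p ∈ S then K else 1) * ((p : ℝ) ^ δ) ^ n.factorization p :=
        prod_le_prod (fun _ _ => by positivity) hfactor
    _ = (∏ p ∈ n.primeFactors ∩ S, K) *
          (∏ p ∈ n.primeFactors, (p : ℝ) ^ n.factorization p) ^ δ := by
        rw [prod_mul_distrib, prod_ite_mem, ← Real.finsetProd_rpow _ _ (fun _ _ => by positivity)]
        congr 1
        exact prod_congr rfl fun p _ => Real.rpow_pow_comm (Nat.cast_nonneg p) _ _
    _ ≤ K ^ #S * n ^ δ := by
        rw [prod_const]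
        gcongr
        · exact inter_subset_right
        · exact_mod_cast (Nat.prod_primeFactors_pow_factorization hn).symm.le

theorem Int.card_divisors (z : ℤ) : #z.divisors = 2 * #z.natAbs.divisors := by
  rw [Int.divisors, card_disjUnion, card_map, card_map, two_mul]

theorem Int.exists_card_divisors_le_mul_rpow {δ : ℝ} (hδ : 0 < δ) :
    ∃ C, 0 ≤ C ∧ ∀ z : ℤ, (#z.divisors : ℝ) ≤ C * |(z : ℝ)| ^ δ := by
  obtain ⟨C, hC0, hC⟩ := Nat.exists_card_divisors_le_mul_rpow hδ
  refine ⟨2 * C, by positivity, fun z => ?_⟩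
  have h := hC z.natAbs
  rw [Nat.cast_natAbs, Int.cast_abs] at h
  rw [Int.card_divisors, Nat.cast_mul, Nat.cast_two, mul_assoc]
  gcongr

theorem card_filter_mul_eq_mul_le (s : Finset ℤ) :
    #{r ∈ (s ×ˢ s) ×ˢ (s ×ˢ s) | r.1.1 * r.1.2 = r.2.1 * r.2.2} ≤
      4 * #s ^ 2 + ∑ p ∈ s ×ˢ s, #(p.1 * p.2).divisors := by
  set Z := {p ∈ s ×ˢ s | p.1 * p.2 = 0}
  have hZ : #Z ≤ 2 * #s := by
    have hsub : Z ⊆ ({0} ×ˢ s) ∪ (s ×ˢ {0}) := by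
      intro p hp
      simp only [Z, mem_filter, mem_product, mem_union, mem_singleton] at hp ⊢
      rcases mul_eq_zero.mp hp.2 with h | h
      · exact Or.inl ⟨h, hp.1.2⟩
      · exact Or.inr ⟨hp.1.1, h⟩
    refine (card_le_card hsub).trans ((card_union_le _ _).trans ?_)
    simp [two_mul]
  have hfiber : ∀ p ∈ s ×ˢ s, #{q ∈ s ×ˢ s | p.1 * p.2 = q.1 * q.2} ≤
      (if p.1 * p.2 = 0 then 2 * #s else 0) + #(p.1 * p.2).divisors := by
    intro p _
    split_ifs with hp
    · simp only [hp, Int.divisors_zero, card_empty, add_zero, eq_comm (a := (0 : ℤ))]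
      exact hZ
    · rw [zero_add]
      refine card_le_card_of_injOn Prod.fst (fun q hq => ?_) (fun q hq q' hq' h => ?_)
      · simp only [coe_filter, Set.mem_ofPred_eq, mem_coe, Int.mem_divisors] at hq ⊢
        exact ⟨⟨q.2, hq.2⟩, hp⟩
      · simp only [coe_filter, Set.mem_ofPred_eq] at hq hq'
        have hq0 : q.1 ≠ 0 := by rintro h0; rw [hq.2, h0, zero_mul] at hp; exact hp rfl
        have hmul : q.1 * q.2 = q.1 * q'.2 := by rw [← hq.2, hq'.2, h]
        exact Prod.ext h (mul_left_cancel₀ hq0 hmul)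
  calc #{r ∈ (s ×ˢ s) ×ˢ (s ×ˢ s) | r.1.1 * r.1.2 = r.2.1 * r.2.2}
      = ∑ p ∈ s ×ˢ s, #{q ∈ s ×ˢ s | p.1 * p.2 = q.1 * q.2} := by
        simp only [card_filter, sum_product]
    _ ≤ ∑ p ∈ s ×ˢ s, ((if p.1 * p.2 = 0 then 2 * #s else 0) + #(p.1 * p.2).divisors) :=
        sum_le_sum hfiber
    _ = #Z * (2 * #s) + ∑ p ∈ s ×ˢ s, #(p.1 * p.2).divisors := by
        rw [sum_add_distrib, sum_ite, sum_const_zero, add_zero, sum_const, smul_eq_mul]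
    _ ≤ 2 * #s * (2 * #s) + ∑ p ∈ s ×ˢ s, #(p.1 * p.2).divisors := by gcongr
    _ = 4 * #s ^ 2 + ∑ p ∈ s ×ˢ s, #(p.1 * p.2).divisors := by ring

theorem card_filter_mul_eq_mul_Icc_le {C δ : ℝ} (hδ : 0 ≤ δ) (hC0 : 0 ≤ C)
    (hC : ∀ z : ℤ, (#z.divisors : ℝ) ≤ C * |(z : ℝ)| ^ δ) {Q : ℤ} (hQ : 0 ≤ Q) :
    (#{r ∈ (Icc (-Q) Q ×ˢ Icc (-Q) Q) ×ˢ (Icc (-Q) Q ×ˢ Icc (-Q) Q) |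
        r.1.1 * r.1.2 = r.2.1 * r.2.2} : ℝ) ≤
      (4 + C * (Q : ℝ) ^ (2 * δ)) * (2 * Q + 1) ^ 2 := by
  set J := Icc (-Q) Q
  have hJ : (#J : ℝ) = 2 * Q + 1 := by
    have hcard : (#J : ℤ) = 2 * Q + 1 := by simp only [J, Int.card_Icc]; omega
    exact_mod_cast hcard
  have habs : ∀ z ∈ J, |(z : ℝ)| ≤ Q := fun z hz => by
    rw [← Int.cast_abs]
    exact_mod_cast abs_le.mpr (mem_Icc.mp hz)
  have hdiv : ∀ p ∈ J ×ˢ J, (#(p.1 * p.2).divisors : ℝ) ≤ C * (Q : ℝ) ^ (2 * δ) := by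
    intro p hp
    rw [mem_product] at hp
    calc (#(p.1 * p.2).divisors : ℝ) ≤ C * |((p.1 * p.2 : ℤ) : ℝ)| ^ δ := hC _
      _ ≤ C * ((Q : ℝ) ^ 2) ^ δ := by
        gcongr
        rw [Int.cast_mul, abs_mul, sq]
        exact mul_le_mul (habs _ hp.1) (habs _ hp.2) (abs_nonneg _) (by exact_mod_cast hQ)
      _ = C * (Q : ℝ) ^ (2 * δ) := by
        rw [← Real.rpow_natCast_mul (by exact_mod_cast hQ), Nat.cast_two]
  calc (#{r ∈ (J ×ˢ J) ×ˢ (J ×ˢ J) | r.1.1 * r.1.2 = r.2.1 * r.2.2} : ℝ)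
      ≤ 4 * #J ^ 2 + ∑ p ∈ J ×ˢ J, (#(p.1 * p.2).divisors : ℝ) := by
        exact_mod_cast card_filter_mul_eq_mul_le J
    _ ≤ 4 * #J ^ 2 + #J ^ 2 * (C * (Q : ℝ) ^ (2 * δ)) := by
        gcongr
        simpa [sq] using sum_le_card_nsmul _ _ _ hdiv
    _ = (4 + C * (Q : ℝ) ^ (2 * δ)) * (2 * Q + 1) ^ 2 := by rw [hJ]; ring

theorem card_filter_sq_add_sq_eq_le (N : ℤ) :
    #{q ∈ (Icc (-N) N ×ˢ Icc (-N) N) ×ˢ (Icc (-N) N ×ˢ Icc (-N) N) |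
        q.1.1 ^ 2 + q.2.1 ^ 2 = q.1.2 ^ 2 + q.2.2 ^ 2} ≤
      #{r ∈ (Icc (-(2 * N)) (2 * N) ×ˢ Icc (-(2 * N)) (2 * N)) ×ˢ
          (Icc (-(2 * N)) (2 * N) ×ˢ Icc (-(2 * N)) (2 * N)) |
        r.1.1 * r.1.2 = r.2.1 * r.2.2} := by
  refine card_le_card_of_injOn
    (fun q => ((q.1.1 - q.1.2, q.1.1 + q.1.2), (q.2.2 - q.2.1, q.2.2 + q.2.1)))
    (fun q hq => ?_) (fun q _ q' _ h => ?_)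
  · simp only [coe_filter, mem_product, mem_Icc, Set.mem_ofPred_eq] at hq ⊢
    obtain ⟨⟨⟨⟨_, _⟩, _, _⟩, ⟨_, _⟩, _, _⟩, heq⟩ := hq
    refine ⟨⟨⟨⟨by omega, by omega⟩, by omega, by omega⟩, ⟨by omega, by omega⟩, by omega, by omega⟩,
      ?_⟩
    linear_combination heq
  · simp only [Prod.ext_iff] at h ⊢
    omega

theorem integral_exp_two_pi_I_int_mul (k : ℤ) :
    ∫ α in (0 : ℝ)..1, Complex.exp (2 * π * Complex.I * (k * α)) = if k = 0 then 1 else 0 := by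
  split_ifs with hk
  · simp [hk]
  · have hc : 2 * π * Complex.I * k ≠ 0 := by simp [Real.pi_ne_zero, hk]
    simp_rw [← mul_assoc]
    rw [integral_exp_mul_complex hc]
    simp [mul_comm _ (k : ℂ), Complex.exp_int_mul_two_pi_mul_I]

theorem integral_norm_sum_exp_pow_four {ι : Type*} (s : Finset ι) (f : ι → ℤ) :
    ∫ α in (0 : ℝ)..1, ‖∑ y ∈ s, Complex.exp (2 * π * Complex.I * (f y * α))‖ ^ 4 =
      #{q ∈ (s ×ˢ s) ×ˢ (s ×ˢ s) | f q.1.1 + f q.2.1 = f q.1.2 + f q.2.2} := by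
  set S := fun α : ℝ => ∑ y ∈ s, Complex.exp (2 * π * Complex.I * (f y * α))
  have hexpand : ∀ α : ℝ, ((‖S α‖ ^ 4 : ℝ) : ℂ) = ∑ q ∈ (s ×ˢ s) ×ˢ (s ×ˢ s),
      Complex.exp (2 * π * Complex.I *
        ((f q.1.1 - f q.1.2 + f q.2.1 - f q.2.2 : ℤ) * α)) := by
    intro α
    rw [show ((‖S α‖ ^ 4 : ℝ) : ℂ) = (S α * starRingEnd ℂ (S α)) ^ 2 by
      rw [Complex.mul_conj, Complex.normSq_eq_norm_sq]; push_cast; ring]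
    simp only [S, map_sum, sum_mul_sum, ← sum_product', sq]
    refine sum_congr rfl fun q _ => ?_
    simp only [← Complex.exp_conj, map_mul, map_ofNat, Complex.conj_I, Complex.conj_ofReal,
      map_intCast, ← Complex.exp_add]
    congr 1
    push_cast
    ring
  have hintegrable : ∀ k : ℤ, IntervalIntegrable
      (fun α : ℝ => Complex.exp (2 * π * Complex.I * (k * α))) MeasureTheory.volume 0 1 :=
    fun k => (by fun_prop : Continuous _).intervalIntegrable 0 1
  apply Complex.ofReal_injective
  rw [← intervalIntegral.integral_ofReal, intervalIntegral.integral_congr fun α _ => hexpand α,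
    intervalIntegral.integral_finsetSum fun q _ => hintegrable _]
  simp only [integral_exp_two_pi_I_int_mul, sum_boole]
  push_cast
  congr 2
  exact filter_congr fun _ _ => by omega

theorem integral_norm_sum_exp_mul_sq_pow_four {x : ℤ} (hx : x ≠ 0) (N : ℤ) :
    ∫ α in (0 : ℝ)..1, ‖∑ y ∈ Icc (-N) N,
        Complex.exp (2 * π * Complex.I * (α * (x : ℝ) * (y : ℝ) ^ 2))‖ ^ 4 =
      #{q ∈ (Icc (-N) N ×ˢ Icc (-N) N) ×ˢ (Icc (-N) N ×ˢ Icc (-N) N) |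
        q.1.1 ^ 2 + q.2.1 ^ 2 = q.1.2 ^ 2 + q.2.2 ^ 2} := by
  have h := integral_norm_sum_exp_pow_four (Icc (-N) N) (fun y => x * y ^ 2)
  simp only [← mul_add, mul_right_inj' hx] at h
  convert h using 8 with α y
  push_cast
  ring

theorem hua_with_coefficient : ∀ ε : ℝ, 0 < ε → ∃ C : ℝ, ∀ (x : ℤ) (P : ℝ),
    x ≠ 0 → 1 ≤ P →
    (∫ α in (0 : ℝ)..1,
        ‖∑ y ∈ Finset.Icc (-⌊P⌋) ⌊P⌋,
          Complex.exp (2 * Real.pi * Complex.I * (α * (x : ℝ) * (y : ℝ) ^ 2))‖ ^ 4) ≤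
      C * P ^ ((2 : ℝ) + ε) := by
  intro ε hε
  obtain ⟨C, hC0, hC⟩ := Int.exists_card_divisors_le_mul_rpow (half_pos hε)
  refine ⟨25 * (4 + C * 2 ^ ε), fun x P hx hP => ?_⟩
  have hN : 1 ≤ ⌊P⌋ := Int.le_floor.mpr (by exact_mod_cast hP)
  have hNP : (⌊P⌋ : ℝ) ≤ P := Int.floor_le P
  have hpow : ((2 * ⌊P⌋ : ℤ) : ℝ) ^ (2 * (ε / 2)) ≤ 2 ^ ε * P ^ ε := by
    rw [mul_div_cancel₀ _ two_ne_zero, ← Real.mul_rpow zero_le_two (by linarith)]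
    gcongr
    push_cast
    linarith
  rw [integral_norm_sum_exp_mul_sq_pow_four hx]
  calc _ ≤ (#{r ∈ (Icc (-(2 * ⌊P⌋)) (2 * ⌊P⌋) ×ˢ Icc (-(2 * ⌊P⌋)) (2 * ⌊P⌋)) ×ˢ
          (Icc (-(2 * ⌊P⌋)) (2 * ⌊P⌋) ×ˢ Icc (-(2 * ⌊P⌋)) (2 * ⌊P⌋)) |
          r.1.1 * r.1.2 = r.2.1 * r.2.2} : ℝ) := by
        exact_mod_cast card_filter_sq_add_sq_eq_le ⌊P⌋
    _ ≤ (4 + C * ((2 * ⌊P⌋ : ℤ) : ℝ) ^ (2 * (ε / 2))) * (2 * (2 * ⌊P⌋ : ℤ) + 1) ^ 2 :=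
        card_filter_mul_eq_mul_Icc_le (by positivity) hC0 hC (by omega)
    _ ≤ (4 + C * (2 ^ ε * P ^ ε)) * (5 * P) ^ 2 := by
        gcongr
        push_cast
        linarith
    _ ≤ 25 * (4 + C * 2 ^ ε) * P ^ ((2 : ℝ) + ε) := by
        rw [Real.rpow_add (by linarith), Real.rpow_two]
        nlinarith [Real.one_le_rpow hP hε.le, Real.rpow_nonneg (zero_le_two (α := ℝ)) ε]
end

section
/- For any integer $q \ge 1$, real $X \ge 1$, and $\varepsilon > 0$, the number of positive integers $u \le X$ all of whose prime factors divide $q$ is $O_\varepsilon(X^\varepsilon q^\varepsilon)$. -/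
/-! Rankin's trick: each `u ≤ X` counted contributes `1 ≤ (X / u) ^ ε`, so the count is at most
`X ^ ε` times the sum of `u ^ (-ε)` over all `u` whose prime factors divide `q`, which is the Euler
product `∏_{p ∣ q} (1 - p ^ (-ε))⁻¹`. A factor with `p ^ ε ≥ 2` is at most `p ^ ε`, and these
multiply to at most `q ^ ε`; the remaining factors are each at most `(1 - 2 ^ (-ε))⁻¹`, and they
come from primes below `2 ^ (1 / ε)`, so there are boundedly many of them. -/

open Finset

noncomputable def rpowNegMonoidHom (ε : ℝ) : ℕ →* ℝ where
  toFun n := (n : ℝ) ^ (-ε)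
  map_one' := by simp
  map_mul' m n := by
    push_cast
    exact Real.mul_rpow (Nat.cast_nonneg m) (Nat.cast_nonneg n)

theorem hasSum_rpow_neg_factoredNumbers {ε : ℝ} (hε : 0 < ε) (s : Finset ℕ) :
    HasSum ((Nat.factoredNumbers s).indicator fun n : ℕ ↦ (n : ℝ) ^ (-ε))
      (∏ p ∈ s with p.Prime, (1 - (p : ℝ) ^ (-ε))⁻¹) := by
  rw [← hasSum_subtype_iff_indicator]
  refine (EulerProduct.summable_and_hasSum_factoredNumbers_prod_filter_prime_geometric
    (f := rpowNegMonoidHom ε) (fun hp ↦ ?_) s).2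
  change ‖(_ : ℝ) ^ (-ε)‖ < 1
  rw [Real.norm_of_nonneg (by positivity)]
  exact Real.rpow_lt_one_of_one_lt_of_neg (by exact_mod_cast hp.one_lt) (neg_neg_of_pos hε)

theorem sum_rpow_neg_le_prod_of_subset_factoredNumbers {ε : ℝ} (hε : 0 < ε) {s S : Finset ℕ}
    (hS : ↑S ⊆ Nat.factoredNumbers s) :
    ∑ u ∈ S, (u : ℝ) ^ (-ε) ≤ ∏ p ∈ s with p.Prime, (1 - (p : ℝ) ^ (-ε))⁻¹ := by
  have h := sum_le_hasSum S (fun n _ ↦ Set.indicator_nonneg (fun _ _ ↦ by positivity) n)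
    (hasSum_rpow_neg_factoredNumbers hε s)
  rwa [sum_congr rfl fun u hu ↦ Set.indicator_of_mem (hS hu) _] at h

theorem card_le_rpow_mul_sum_rpow_neg {S : Finset ℕ} {X ε : ℝ} (hε : 0 ≤ ε)
    (hS : ∀ u ∈ S, 0 < u ∧ (u : ℝ) ≤ X) :
    (#S : ℝ) ≤ X ^ ε * ∑ u ∈ S, (u : ℝ) ^ (-ε) := by
  rw [mul_sum, card_eq_sum_ones, Nat.cast_sum]
  refine sum_le_sum fun u hu ↦ ?_
  obtain ⟨hu_pos, huX⟩ := hS u hu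
  have hu : (0 : ℝ) < u := by exact_mod_cast hu_pos
  rw [Nat.cast_one, Real.rpow_neg hu.le, ← div_eq_mul_inv, one_le_div (by positivity)]
  exact Real.rpow_le_rpow hu.le huX hε

theorem inv_one_sub_inv_le_self {y : ℝ} (hy : 2 ≤ y) : (1 - y⁻¹)⁻¹ ≤ y := by
  have : y⁻¹ ≤ 2⁻¹ := inv_anti₀ two_pos hy
  calc (1 - y⁻¹)⁻¹ ≤ 2 := by rw [inv_le_comm₀ (by linarith) two_pos]; linarith
    _ ≤ y := hy

theorem one_le_inv_one_sub_rpow_neg {x ε : ℝ} (hε : 0 < ε) (hx : 1 < x) :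
    1 ≤ (1 - x ^ (-ε))⁻¹ := by
  have hpos : 0 < x ^ (-ε) := Real.rpow_pos_of_pos (by linarith) _
  have hlt : x ^ (-ε) < 1 := Real.rpow_lt_one_of_one_lt_of_neg hx (neg_neg_of_pos hε)
  rw [one_le_inv₀ (by linarith)]
  linarith

theorem inv_one_sub_rpow_neg_le {x ε : ℝ} (hε : 0 < ε) (hx : 2 ≤ x) :
    (1 - x ^ (-ε))⁻¹ ≤ (1 - (2 : ℝ) ^ (-ε))⁻¹ := by
  have h2 : (2 : ℝ) ^ (-ε) < 1 := Real.rpow_lt_one_of_one_lt_of_neg one_lt_two (neg_neg_of_pos hε)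
  have hx2 : x ^ (-ε) ≤ (2 : ℝ) ^ (-ε) := Real.rpow_le_rpow_of_nonpos two_pos hx (by linarith)
  exact inv_anti₀ (by linarith) (by linarith)

theorem card_filter_rpow_lt_le {ε : ℝ} (hε : 0 < ε) {a : ℝ} (ha : 0 ≤ a) (s : Finset ℕ) :
    #(s.filter fun n : ℕ ↦ (n : ℝ) ^ ε < a) ≤ ⌈a ^ ε⁻¹⌉₊ := by
  refine (card_le_card fun n hn ↦ ?_).trans (card_range _).le
  rw [mem_filter] at hn
  rw [mem_range, Nat.lt_ceil]
  exact (Real.lt_rpow_inv_iff_of_pos (Nat.cast_nonneg n) ha hε).2 hn.2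

theorem prod_rpow_le_rpow_of_subset_primeFactors {ε : ℝ} (hε : 0 ≤ ε) {q : ℕ} (hq : q ≠ 0)
    {t : Finset ℕ} (ht : t ⊆ q.primeFactors) :
    ∏ p ∈ t, (p : ℝ) ^ ε ≤ (q : ℝ) ^ ε := by
  rw [Real.finsetProd_rpow _ _ fun _ _ ↦ Nat.cast_nonneg _, ← Nat.cast_prod]
  gcongr
  exact Nat.le_of_dvd (Nat.pos_of_ne_zero hq)
    ((prod_dvd_prod_of_subset _ _ _ ht).trans q.prod_primeFactors_dvd)

theorem prod_primeFactors_inv_one_sub_rpow_neg_le {ε : ℝ} (hε : 0 < ε) {q : ℕ} (hq : q ≠ 0) :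
    ∏ p ∈ q.primeFactors, (1 - (p : ℝ) ^ (-ε))⁻¹ ≤
      (1 - (2 : ℝ) ^ (-ε))⁻¹ ^ ⌈(2 : ℝ) ^ ε⁻¹⌉₊ * (q : ℝ) ^ ε := by
  set f : ℕ → ℝ := fun p ↦ (1 - (p : ℝ) ^ (-ε))⁻¹
  set c : ℝ := (1 - (2 : ℝ) ^ (-ε))⁻¹
  have two_le : ∀ p ∈ q.primeFactors, (2 : ℝ) ≤ p := fun p hp ↦ by
    exact_mod_cast (Nat.prime_of_mem_primeFactors hp).two_le
  have f_nonneg : ∀ p ∈ q.primeFactors, 0 ≤ f p := fun p hp ↦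
    zero_le_one.trans (one_le_inv_one_sub_rpow_neg hε (by linarith [two_le p hp]))
  have one_le_c : 1 ≤ c := one_le_inv_one_sub_rpow_neg hε one_lt_two
  rw [← prod_filter_mul_prod_filter_not q.primeFactors fun p ↦ (p : ℝ) ^ ε < 2]
  have hsmall : ∏ p ∈ q.primeFactors.filter (fun p : ℕ ↦ (p : ℝ) ^ ε < 2), f p ≤
      c ^ ⌈(2 : ℝ) ^ ε⁻¹⌉₊ := by
    refine (prod_le_prod (fun p hp ↦ f_nonneg p (mem_filter.1 hp).1)
      fun p hp ↦ inv_one_sub_rpow_neg_le hε (two_le p (mem_filter.1 hp).1)).trans ?_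
    rw [prod_const]
    exact pow_le_pow_right₀ one_le_c (card_filter_rpow_lt_le hε zero_le_two _)
  have hlarge : ∏ p ∈ q.primeFactors.filter (fun p : ℕ ↦ ¬(p : ℝ) ^ ε < 2), f p ≤
      (q : ℝ) ^ ε := by
    refine (prod_le_prod (fun p hp ↦ f_nonneg p (mem_filter.1 hp).1) fun p hp ↦ ?_).trans
      (prod_rpow_le_rpow_of_subset_primeFactors hε.le hq (filter_subset _ _))
    change (1 - (p : ℝ) ^ (-ε))⁻¹ ≤ _
    rw [Real.rpow_neg (Nat.cast_nonneg p)]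
    exact inv_one_sub_inv_le_self (not_lt.1 (mem_filter.1 hp).2)
  exact mul_le_mul hsmall hlarge (prod_nonneg fun p hp ↦ f_nonneg p (mem_filter.1 hp).1)
    (pow_nonneg (zero_le_one.trans one_le_c) _)

open scoped Classical in
theorem smooth_numbers_count : ∀ ε : ℝ, 0 < ε → ∃ C : ℝ, ∀ (q : ℕ) (X : ℝ), 1 ≤ q → 1 ≤ X →
    ((((Finset.Icc 1 ⌊X⌋₊).filter
        fun u => ∀ p : ℕ, p.Prime → p ∣ u → p ∣ q).card : ℝ)) ≤
      C * X ^ ε * (q : ℝ) ^ ε := by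
  intro ε hε
  refine ⟨(1 - (2 : ℝ) ^ (-ε))⁻¹ ^ ⌈(2 : ℝ) ^ ε⁻¹⌉₊, fun q X hq hX ↦ ?_⟩
  set S := (Icc 1 ⌊X⌋₊).filter fun u ↦ ∀ p : ℕ, p.Prime → p ∣ u → p ∣ q
  have hS_le : ∀ u ∈ S, 0 < u ∧ (u : ℝ) ≤ X := fun u hu ↦ by
    obtain ⟨hu1, huX⟩ := mem_Icc.1 (mem_filter.1 hu).1
    exact ⟨hu1, (Nat.le_floor_iff (by linarith)).1 huX⟩
  have hS_factored : ↑S ⊆ Nat.factoredNumbers q.primeFactors := fun u hu ↦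
    Nat.mem_factoredNumbers'.2 fun p hp hpu ↦
      Nat.mem_primeFactors.2 ⟨hp, (mem_filter.1 hu).2 p hp hpu, by omega⟩
  have hprimes : q.primeFactors.filter Nat.Prime = q.primeFactors :=
    filter_true_of_mem fun _ ↦ Nat.prime_of_mem_primeFactors
  calc (#S : ℝ) ≤ X ^ ε * ∑ u ∈ S, (u : ℝ) ^ (-ε) := card_le_rpow_mul_sum_rpow_neg hε.le hS_le
    _ ≤ X ^ ε * ((1 - (2 : ℝ) ^ (-ε))⁻¹ ^ ⌈(2 : ℝ) ^ ε⁻¹⌉₊ * (q : ℝ) ^ ε) := by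
      gcongr
      refine (sum_rpow_neg_le_prod_of_subset_factoredNumbers hε hS_factored).trans ?_
      rw [hprimes]
      exact prod_primeFactors_inv_one_sub_rpow_neg_le hε (by omega)
    _ = _ := by ring
end

section
/- With $\psi$ as defined (the complete character sum $\psi(q) = \sum_{(a,q)=1} \sum_{\mathbf{a},\mathbf{b} \bmod q, \gcd(\mathbf{a},q)=1} e_q(a\sum_j a_j b_j^2)$), for every prime $p$ and positive integer $f$ one has $\psi(p^f) = \varphi(p^f) p^{3sf/2}(1 - p^{-s})$ if $f$ is even, and $\psi(p^f) = 0$ if $f$ is odd. -/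
/-!
For fixed `a` coprime to `q = p ^ f` and fixed `𝐛`, the sum over primitive `𝐚` is the sum over
all `𝐚` minus the sum over `𝐚 ≡ 0 mod p`; both factor over the coordinates into complete
exponential sums, leaving `∏ⱼ q·[q ∣ bⱼ²] - ∏ⱼ p^(f-1)·[p^(f-1) ∣ bⱼ²]` (the unit `a` drops out).
Since `p ^ k ∣ b²` iff `p ^ ⌈k/2⌉ ∣ b`, the sum over `𝐛` is then
`p^((2f - ⌈f/2⌉)s) - p^((2f - 1 - ⌊f/2⌋)s)`. The two exponents agree for odd `f` and differ by `s`
for even `f`.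
-/

noncomputable def psi (s q : ℕ) : ℂ :=
  ∑ a ∈ (Finset.range q).filter (fun a => Nat.Coprime a q),
    ∑ av ∈ (Fintype.piFinset fun _ : Fin s => Finset.range q).filter
        (fun av => Nat.Coprime (Finset.univ.gcd av) q),
      ∑ bv ∈ Fintype.piFinset fun _ : Fin s => Finset.range q,
        Complex.exp (2 * Real.pi * Complex.I *
          ((a : ℂ) * ∑ j, (av j : ℂ) * (bv j : ℂ) ^ 2) / q)

open Finset Fintype Complex

/-- The paper's `e_q(t) = e^{2πit/q}`. -/
noncomputable def expFrac (q : ℕ) (t : ℂ) : ℂ := exp (2 * Real.pi * I * t / q)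

lemma expFrac_sum {ι : Type*} (q : ℕ) (s : Finset ι) (t : ι → ℂ) :
    expFrac q (∑ i ∈ s, t i) = ∏ i ∈ s, expFrac q (t i) := by
  simp only [expFrac, mul_sum, sum_div, exp_sum]

lemma sum_range_expFrac (m c : ℕ) (hm : m ≠ 0) :
    ∑ x ∈ range m, expFrac m (c * x) = if m ∣ c then (m : ℂ) else 0 := by
  have hζ := isPrimitiveRoot_exp m hm
  have hterm (x : ℕ) : expFrac m (c * x) = (exp (2 * Real.pi * I / m) ^ c) ^ x := by
    rw [← pow_mul, ← exp_nat_mul, expFrac]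
    push_cast
    ring_nf
  simp only [hterm]
  split_ifs with h
  · simp [(hζ.pow_eq_one_iff_dvd c).2 h]
  · rw [geom_sum_eq ((hζ.pow_eq_one_iff_dvd c).not.2 h), ← pow_mul, mul_comm c m, pow_mul,
      hζ.pow_eq_one, one_pow, sub_self, zero_div]

lemma range_mul_filter_dvd (d n : ℕ) (hd : d ≠ 0) :
    {x ∈ range (d * n) | d ∣ x} = (range n).map ⟨(d * ·), mul_right_injective₀ hd⟩ := by
  ext x
  simp only [mem_filter, mem_range, mem_map, Function.Embedding.coeFn_mk]
  constructor
  · rintro ⟨hx, t, rfl⟩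
    exact ⟨t, Nat.lt_of_mul_lt_mul_left hx, rfl⟩
  · rintro ⟨t, ht, rfl⟩
    exact ⟨Nat.mul_lt_mul_of_pos_left ht (Nat.pos_of_ne_zero hd), dvd_mul_right d t⟩

lemma sum_range_mul_filter_dvd_expFrac (d n c : ℕ) (hd : d ≠ 0) (hn : n ≠ 0) :
    ∑ x ∈ range (d * n) with d ∣ x, expFrac (d * n) (c * x) = if n ∣ c then (n : ℂ) else 0 := by
  rw [range_mul_filter_dvd d n hd, sum_map, ← sum_range_expFrac n c hn]
  refine sum_congr rfl fun t _ => ?_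
  have : (d : ℂ) ≠ 0 := Nat.cast_ne_zero.2 hd
  simp only [expFrac, Function.Embedding.coeFn_mk]
  push_cast
  congr 1
  field_simp

section PrimitiveVectors

variable {ι : Type*} [Fintype ι] [DecidableEq ι] {p f : ℕ}

lemma filter_not_coprime_gcd_eq_piFinset (hp : p.Prime) (hf : f ≠ 0) (N : ℕ) :
    {v ∈ piFinset fun _ : ι => range N | ¬ (univ.gcd v).Coprime (p ^ f)}
      = piFinset fun _ => {x ∈ range N | p ∣ x} := by
  ext v
  simp only [mem_filter, mem_piFinset, Nat.coprime_pow_right_iff (Nat.pos_of_ne_zero hf),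
    Nat.coprime_comm, hp.coprime_iff_not_dvd, not_not, Finset.dvd_gcd_iff, mem_univ, forall_const,
    forall_and]

lemma sum_primitive_expFrac (hp : p.Prime) (hf : f ≠ 0) (c : ι → ℕ) :
    ∑ v ∈ piFinset (fun _ : ι => range (p ^ f)) with (univ.gcd v).Coprime (p ^ f),
        expFrac (p ^ f) (∑ j, (v j : ℂ) * c j)
      = ∏ j, (if p ^ f ∣ c j then (p ^ f : ℂ) else 0)
        - ∏ j, (if p ^ (f - 1) ∣ c j then (p ^ (f - 1) : ℂ) else 0) := by
  have hpf : p * p ^ (f - 1) = p ^ f := by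
    rw [← pow_succ', Nat.sub_add_cancel (Nat.pos_of_ne_zero hf)]
  have hall : ∑ v ∈ piFinset fun _ : ι => range (p ^ f), expFrac (p ^ f) (∑ j, (v j : ℂ) * c j)
      = ∏ j, (if p ^ f ∣ c j then (p ^ f : ℂ) else 0) := by
    simp only [expFrac_sum]
    rw [sum_prod_piFinset _ fun j (x : ℕ) => expFrac (p ^ f) (x * c j)]
    refine prod_congr rfl fun j _ => ?_
    simp only [mul_comm _ (c j : ℂ)]
    exact_mod_cast sum_range_expFrac (p ^ f) (c j) (pow_ne_zero f hp.ne_zero)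
  have hmult : ∑ v ∈ piFinset fun _ : ι => {x ∈ range (p ^ f) | p ∣ x},
      expFrac (p ^ f) (∑ j, (v j : ℂ) * c j)
      = ∏ j, (if p ^ (f - 1) ∣ c j then (p ^ (f - 1) : ℂ) else 0) := by
    simp only [expFrac_sum]
    rw [sum_prod_piFinset _ fun j (x : ℕ) => expFrac (p ^ f) (x * c j)]
    refine prod_congr rfl fun j _ => ?_
    simp only [mul_comm _ (c j : ℂ), ← hpf]
    exact_mod_cast sum_range_mul_filter_dvd_expFrac p (p ^ (f - 1)) (c j) hp.ne_zero
      (pow_ne_zero _ hp.ne_zero)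
  rw [← hall, ← hmult, ← filter_not_coprime_gcd_eq_piFinset hp hf, eq_sub_iff_add_eq,
    sum_filter_add_sum_filter_not]

end PrimitiveVectors

lemma Nat.Prime.pow_dvd_sq_iff {p : ℕ} (hp : p.Prime) (k b : ℕ) :
    p ^ k ∣ b ^ 2 ↔ p ^ ((k + 1) / 2) ∣ b := by
  rcases Nat.eq_zero_or_pos b with rfl | hb
  · simp
  · rw [hp.pow_dvd_iff_le_factorization (pow_ne_zero 2 hb.ne'),
      hp.pow_dvd_iff_le_factorization hb.ne', Nat.factorization_pow, Finsupp.smul_apply,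
      smul_eq_mul]
    omega

section SquareCount

variable {p f k : ℕ}

lemma card_range_filter_pow_dvd_sq (hp : p.Prime) (hk : (k + 1) / 2 ≤ f) :
    #{b ∈ range (p ^ f) | p ^ k ∣ b ^ 2} = p ^ (f - (k + 1) / 2) := by
  have hsplit : p ^ f = p ^ ((k + 1) / 2) * p ^ (f - (k + 1) / 2) := by
    rw [← pow_add, Nat.add_sub_cancel' hk]
  simp only [hp.pow_dvd_sq_iff]
  rw [hsplit, range_mul_filter_dvd _ _ (pow_ne_zero _ hp.ne_zero), card_map, card_range]

lemma sum_range_ite_pow_dvd_sq (hp : p.Prime) (hk : (k + 1) / 2 ≤ f) :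
    ∑ b ∈ range (p ^ f), (if p ^ k ∣ b ^ 2 then (p : ℂ) ^ k else 0)
      = (p : ℂ) ^ (k + f - (k + 1) / 2) := by
  rw [← sum_filter, sum_const, card_range_filter_pow_dvd_sq hp hk, nsmul_eq_mul, Nat.cast_pow,
    ← pow_add]
  congr 1
  omega

end SquareCount

lemma sum_primitive_sum_quadratic_expFrac {ι : Type*} [Fintype ι] [DecidableEq ι] {p f a : ℕ}
    (hp : p.Prime) (hf : f ≠ 0) (ha : a.Coprime (p ^ f)) :
    ∑ av ∈ piFinset (fun _ : ι => range (p ^ f)) with (univ.gcd av).Coprime (p ^ f),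
      ∑ bv ∈ piFinset fun _ : ι => range (p ^ f),
        expFrac (p ^ f) (a * ∑ j, (av j : ℂ) * (bv j : ℂ) ^ 2)
      = (p : ℂ) ^ ((f + f - (f + 1) / 2) * card ι) - (p : ℂ) ^ ((f - 1 + f - f / 2) * card ι) := by
  have hcoef (av bv : ι → ℕ) : (a : ℂ) * ∑ j, (av j : ℂ) * (bv j : ℂ) ^ 2
      = ∑ j, (av j : ℂ) * ((a * bv j ^ 2 : ℕ) : ℂ) := by
    push_cast
    rw [mul_sum]
    exact sum_congr rfl fun j _ => by ring
  have hcancel {k : ℕ} (hk : k ≤ f) (b : ℕ) : p ^ k ∣ a * b ^ 2 ↔ p ^ k ∣ b ^ 2 :=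
    (ha.coprime_dvd_right (pow_dvd_pow p hk)).symm.dvd_mul_left
  rw [sum_comm]
  simp only [hcoef, sum_primitive_expFrac hp hf, hcancel le_rfl, hcancel (Nat.sub_le f 1)]
  rw [sum_sub_distrib, sum_prod_piFinset _ fun _ b => if p ^ f ∣ b ^ 2 then (p : ℂ) ^ f else 0,
    sum_prod_piFinset _ fun _ b => if p ^ (f - 1) ∣ b ^ 2 then (p : ℂ) ^ (f - 1) else 0,
    sum_range_ite_pow_dvd_sq hp (by omega), sum_range_ite_pow_dvd_sq hp (by omega),
    prod_const, prod_const, card_univ, ← pow_mul, ← pow_mul,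
    Nat.sub_add_cancel (Nat.one_le_iff_ne_zero.2 hf)]

lemma psi_prime_pow_eq (s : ℕ) {p f : ℕ} (hp : p.Prime) (hf : f ≠ 0) :
    psi s (p ^ f) = (p ^ f).totient *
      ((p : ℂ) ^ ((f + f - (f + 1) / 2) * s) - (p : ℂ) ^ ((f - 1 + f - f / 2) * s)) := by
  have hinner {a : ℕ} (ha : a.Coprime (p ^ f)) := Fintype.card_fin s ▸
    sum_primitive_sum_quadratic_expFrac (ι := Fin s) hp hf ha
  calc psi s (p ^ f)
      = ∑ _a ∈ range (p ^ f) with _a.Coprime (p ^ f),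
          ((p : ℂ) ^ ((f + f - (f + 1) / 2) * s) - (p : ℂ) ^ ((f - 1 + f - f / 2) * s)) :=
        sum_congr rfl fun a ha => hinner (mem_filter.1 ha).2
    _ = _ := by
      rw [sum_const, nsmul_eq_mul, Nat.totient_eq_card_coprime]
      simp only [Nat.coprime_comm]

theorem psi_prime_power_general (s : ℕ) (p f : ℕ) (hp : p.Prime) (hf : 1 ≤ f) :
    (Even f → psi s (p ^ f) =
      (Nat.totient (p ^ f) : ℂ) * (p : ℂ) ^ (3 * s * f / 2) * (1 - (p : ℂ) ^ (-(s : ℤ)))) ∧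
    (Odd f → psi s (p ^ f) = 0) := by
  rw [psi_prime_pow_eq s hp (by omega)]
  constructor
  · rintro ⟨m, rfl⟩
    obtain ⟨n, rfl⟩ : ∃ n, m = n + 1 := ⟨m - 1, by omega⟩
    have hp0 : (p : ℂ) ≠ 0 := Nat.cast_ne_zero.2 hp.ne_zero
    have hhalf : 3 * s * (n + 1 + (n + 1)) / 2 = (3 * n + 2) * s + s := by
      rw [show 3 * s * (n + 1 + (n + 1)) = ((3 * n + 2) * s + s) * 2 by ring,
        Nat.mul_div_cancel _ two_pos]
    rw [show n + 1 + (n + 1) + (n + 1 + (n + 1)) - (n + 1 + (n + 1) + 1) / 2 = 3 * n + 2 + 1 by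
        omega,
      show n + 1 + (n + 1) - 1 + (n + 1 + (n + 1)) - (n + 1 + (n + 1)) / 2 = 3 * n + 2 by omega,
      hhalf, add_one_mul, pow_add (p : ℂ) ((3 * n + 2) * s) s, zpow_neg, zpow_natCast]
    field_simp
  · rintro ⟨m, rfl⟩
    rw [show 2 * m + 1 - 1 + (2 * m + 1) - (2 * m + 1) / 2
        = 2 * m + 1 + (2 * m + 1) - (2 * m + 1 + 1) / 2 by omega, sub_self, mul_zero]

theorem psi_prime_power (s : ℕ) (hs : 1 ≤ s) (p f : ℕ) (hp : p.Prime) (hf : 1 ≤ f) :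
    (Even f → psi s (p ^ f) =
      (Nat.totient (p ^ f) : ℂ) * (p : ℂ) ^ (3 * s * f / 2) * (1 - (p : ℂ) ^ (-(s : ℤ)))) ∧
    (Odd f → psi s (p ^ f) = 0) :=
  psi_prime_power_general s p f hp hf
end
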